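/- Let A be a finite nonempty set of acts and let a ∈ A satisfy mML({a},A) ≤ mML({b},A) for every b ∈ A. Then a ∈ D_M(A). -/

import Mathlib

open Finset

/-- Upper expectation of `f` with respect to the set `P` of probability mass functions:
`Ē(f) = sup_{p ∈ P} ∑ ω, p ω * f ω` (the sup is attained when `P` is nonempty and compact). -/
noncomputable def upperExp {Ω : Type*} [Fintype Ω] (P : Set (Ω → ℝ)) (f : Ω → ℝ) : ℝ :=
  sSup ((fun p => ∑ ω, p ω * f ω) '' P)

/-- `P` is a credal set: a nonempty compact set of probability mass functions on `Ω`. -/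
def IsCredal {Ω : Type*} [Fintype Ω] (P : Set (Ω → ℝ)) : Prop :=
  P.Nonempty ∧ IsCompact P ∧ ∀ p ∈ P, (∀ ω, 0 ≤ p ω) ∧ ∑ ω, p ω = 1

/-- `a ≻ a'`: act `a` dominates act `a'`, i.e. `Ē(a' − a) < 0` (equivalently `E̲(a − a') > 0`). -/
def dominates {Ω : Type*} [Fintype Ω] (P : Set (Ω → ℝ)) (a a' : Ω → ℝ) : Prop :=
  upperExp P (a' - a) < 0

/-- `a` is a maximal act of `A`: `a ∈ A` and no `a' ∈ A` dominates `a`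
(membership in `D_M(A)`). -/
def maximalIn {Ω : Type*} [Fintype Ω] (P : Set (Ω → ℝ)) (A : Finset (Ω → ℝ))
    (a : Ω → ℝ) : Prop :=
  a ∈ A ∧ ∀ a' ∈ A, ¬ dominates P a' a

/-- `mML(S, A) = min_{a ∈ S} max_{a' ∈ A ∖ S} Ē(a' − a)`, valued in `EReal` so that the
maximum over the empty set is `−∞` (hence `mML(A, A) = −∞` when `S` is nonempty). -/
noncomputable def mML {Ω : Type*} [Fintype Ω] [DecidableEq (Ω → ℝ)]
    (P : Set (Ω → ℝ)) (S A : Finset (Ω → ℝ)) : EReal :=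
  S.inf fun a => (A \ S).sup fun a' => ((upperExp P (a' - a) : ℝ) : EReal)

/-- `MmL(S, A) = max_{a' ∈ A ∖ S} min_{a ∈ S} Ē(a' − a)`, valued in `EReal` so that the
maximum over the empty set is `−∞` (hence `MmL(A, A) = −∞`). -/
noncomputable def MmL {Ω : Type*} [Fintype Ω] [DecidableEq (Ω → ℝ)]
    (P : Set (Ω → ℝ)) (S A : Finset (Ω → ℝ)) : EReal :=
  (A \ S).sup fun a' => S.inf fun a => ((upperExp P (a' - a) : ℝ) : EReal)

/-!
If `b ≻ a`, subadditivity of `Ē` gives `Ē(a' − b) ≤ Ē(a' − a) + Ē(a − b) < Ē(a' − a)` for every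
act `a'`, while `Ē(b − a) ≥ −Ē(a − b) > 0`. Hence every term of the maximum defining
`mML({b}, A)` lies strictly below `mML({a}, A)`, contradicting the minimality of the latter.
-/

section UpperExp

variable {Ω : Type*} [Fintype Ω] {P : Set (Ω → ℝ)}

lemma upperExp_le (hne : P.Nonempty) {f : Ω → ℝ} {c : ℝ}
    (h : ∀ p ∈ P, ∑ ω, p ω * f ω ≤ c) : upperExp P f ≤ c :=
  csSup_le (hne.image _) (by rintro x ⟨p, hp, rfl⟩; exact h p hp)

lemma le_upperExp (hc : IsCompact P) {p : Ω → ℝ} (hp : p ∈ P) (f : Ω → ℝ) :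
    ∑ ω, p ω * f ω ≤ upperExp P f :=
  le_csSup (hc.image (continuous_finsetSum _ fun ω _ =>
    (continuous_apply ω).mul continuous_const)).bddAbove ⟨p, hp, rfl⟩

lemma upperExp_add_le (hne : P.Nonempty) (hc : IsCompact P) (f g : Ω → ℝ) :
    upperExp P (f + g) ≤ upperExp P f + upperExp P g :=
  upperExp_le hne fun p hp => by
    simp only [Pi.add_apply, mul_add, Finset.sum_add_distrib]
    exact add_le_add (le_upperExp hc hp f) (le_upperExp hc hp g)

lemma upperExp_add_upperExp_neg_nonneg (hne : P.Nonempty) (hc : IsCompact P) (f : Ω → ℝ) :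
    0 ≤ upperExp P f + upperExp P (-f) := by
  obtain ⟨p, hp⟩ := hne
  have hf := le_upperExp hc hp f
  have hnf := le_upperExp hc hp (-f)
  simp only [Pi.neg_apply, mul_neg, Finset.sum_neg_distrib] at hnf
  linarith

end UpperExp

section Dominance

variable {Ω : Type*} [Fintype Ω] {P : Set (Ω → ℝ)} {a b : Ω → ℝ}

lemma upperExp_sub_pos_of_dominates (hne : P.Nonempty) (hc : IsCompact P)
    (h : dominates P b a) : 0 < upperExp P (b - a) := by
  have := upperExp_add_upperExp_neg_nonneg hne hc (a - b)
  rw [neg_sub] at this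
  unfold dominates at h
  linarith

lemma dominates.ne (hne : P.Nonempty) (hc : IsCompact P) (h : dominates P b a) : b ≠ a := by
  rintro rfl
  exact lt_asymm h (upperExp_sub_pos_of_dominates hne hc h)

lemma upperExp_sub_lt_of_dominates (hne : P.Nonempty) (hc : IsCompact P)
    (h : dominates P b a) (c : Ω → ℝ) : upperExp P (c - b) < upperExp P (c - a) := by
  have := upperExp_add_le hne hc (c - a) (a - b)
  rw [sub_add_sub_cancel] at this
  exact this.trans_lt (add_lt_of_neg_right _ h)

end Dominance

section MML

variable {Ω : Type*} [Fintype Ω] [DecidableEq (Ω → ℝ)] {P : Set (Ω → ℝ)}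

lemma mML_singleton (A : Finset (Ω → ℝ)) (a : Ω → ℝ) :
    mML P {a} A = (A.erase a).sup fun a' => ((upperExp P (a' - a) : ℝ) : EReal) := by
  rw [mML, Finset.inf_singleton, Finset.sdiff_singleton_eq_erase]

lemma mML_singleton_lt_of_dominates (hne : P.Nonempty) (hc : IsCompact P)
    {A : Finset (Ω → ℝ)} {a b : Ω → ℝ} (hb : b ∈ A) (h : dominates P b a) :
    mML P {b} A < mML P {a} A := by
  have le_mML : ∀ a' ∈ A, a' ≠ a → ((upperExp P (a' - a) : ℝ) : EReal) ≤ mML P {a} A :=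
    fun a' ha' ha'a => by
      rw [mML_singleton]
      exact Finset.le_sup (f := fun a' => ((upperExp P (a' - a) : ℝ) : EReal))
        (Finset.mem_erase.mpr ⟨ha'a, ha'⟩)
  have hba_le : ((upperExp P (b - a) : ℝ) : EReal) ≤ mML P {a} A := le_mML b hb (h.ne hne hc)
  rw [mML_singleton A b, Finset.sup_lt_iff ((EReal.bot_lt_coe _).trans_le hba_le)]
  intro a' ha'
  obtain rfl | ha'a := eq_or_ne a' a
  · refine lt_of_lt_of_le ?_ hba_le
    exact EReal.coe_lt_coe_iff.mpr (h.trans (upperExp_sub_pos_of_dominates hne hc h))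
  · exact (EReal.coe_lt_coe_iff.mpr (upperExp_sub_lt_of_dominates hne hc h a')).trans_le
      (le_mML a' (Finset.mem_of_mem_erase ha') ha'a)

end MML

theorem stmt4_general {Ω : Type*} [Fintype Ω] [DecidableEq (Ω → ℝ)]
    (P : Set (Ω → ℝ)) (hP : IsCredal P)
    (A : Finset (Ω → ℝ)) (a : Ω → ℝ) (ha : a ∈ A)
    (hopt : ∀ b ∈ A, mML P {a} A ≤ mML P {b} A) :
    maximalIn P A a :=
  ⟨ha, fun b hb hdom => (hopt b hb).not_gt (mML_singleton_lt_of_dominates hP.1 hP.2.1 hb hdom)⟩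

theorem stmt4 {Ω : Type*} [Fintype Ω] [Nonempty Ω] [DecidableEq (Ω → ℝ)]
    (P : Set (Ω → ℝ)) (hP : IsCredal P)
    (A : Finset (Ω → ℝ)) (hA : A.Nonempty) (a : Ω → ℝ) (ha : a ∈ A)
    (hopt : ∀ b ∈ A, mML P {a} A ≤ mML P {b} A) :
    maximalIn P A a :=
  stmt4_general P hP A a ha hopt
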